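/- Under the recursions P_{i+1} = α² P_i + α^{-2}(1-α²)² N_i (i.e., γ = α² with β = 1-α²) and P_1 = α^{-2}ε₀², with N_i ≥ 0, (1/n)Σ N_i = N̄ and |ε₀| ≤ 1/2, the average power satisfies (1/n)Σ_{i=1}^n P_i < N̄·(α^{-2} - 1) + (1/n)·1/(4α²(1-α²)). -/

import Mathlib

/-- Average-power bound for the recursion with β = 1-α² (γ = α²). -/
theorem stmt9 (n : ℕ) (hn : 1 ≤ n) (α ε₀ Nbar : ℝ) (hα : α ∈ Set.Ioo (0 : ℝ) 1)
    (hε₀ : |ε₀| ≤ 1 / 2)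
    (N P : ℕ → ℝ) (hN : ∀ j ∈ Finset.Icc 1 n, 0 ≤ N j)
    (hNbar : Nbar = (1 / (n : ℝ)) * ∑ j ∈ Finset.Icc 1 n, N j)
    (hP1 : P 1 = α⁻¹ ^ 2 * ε₀ ^ 2)
    (hrec : ∀ i ≥ 1, P (i + 1) = α ^ 2 * P i + α⁻¹ ^ 2 * (1 - α ^ 2) ^ 2 * N i) :
    (1 / (n : ℝ)) * ∑ i ∈ Finset.Icc 1 n, P i
      < Nbar * (α⁻¹ ^ 2 - 1) + (1 / (n : ℝ)) * (1 / (4 * α ^ 2 * (1 - α ^ 2))) := by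
  obtain ⟨hα0, hα1⟩ := hα
  have hα2 : (0:ℝ) < α ^ 2 := by positivity
  have h1α2 : (0:ℝ) < 1 - α ^ 2 := by nlinarith
  set c : ℝ := α⁻¹ ^ 2 * (1 - α ^ 2) ^ 2 with hc
  have hcpos : 0 ≤ c := by positivity
  have key : ∀ m, 1 ≤ m → m ≤ n →
      (1 - α ^ 2) * ∑ i ∈ Finset.Icc 1 m, P i
        = P 1 - P (m + 1) + c * ∑ i ∈ Finset.Icc 1 m, N i
      ∧ α ^ (2 * m) * P 1 ≤ P (m + 1) := by
    intro m hm
    induction m, hm using Nat.le_induction with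
    | base =>
      intro hmn
      have hN1 : 0 ≤ N 1 := hN 1 (by simp [hmn])
      constructor
      · simp [hrec 1 le_rfl]; ring
      · rw [hrec 1 le_rfl]
        have h21 : α ^ (2 * 1) = α ^ 2 := by norm_num
        rw [h21]
        nlinarith [mul_nonneg hcpos hN1]
    | succ m hm ih =>
      intro hmn
      obtain ⟨ihe, ihl⟩ := ih (le_trans (Nat.le_succ m) hmn)
      have hNm : 0 ≤ N (m + 1) := hN (m + 1) (by simp [hmn, Nat.le_add_left])
      have hsum : ∑ i ∈ Finset.Icc 1 (m + 1), P i
          = (∑ i ∈ Finset.Icc 1 m, P i) + P (m + 1) :=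
        Finset.sum_Icc_succ_top (by omega) _
      have hsumN : ∑ i ∈ Finset.Icc 1 (m + 1), N i
          = (∑ i ∈ Finset.Icc 1 m, N i) + N (m + 1) :=
        Finset.sum_Icc_succ_top (by omega) _
      have hr := hrec (m + 1) (by omega)
      constructor
      · rw [hsum, hsumN, hr]; linarith [ihe]; 
      · rw [hr]
        have h1 : α ^ 2 * (α ^ (2 * m) * P 1) ≤ α ^ 2 * P (m + 1) :=
          mul_le_mul_of_nonneg_left ihl (le_of_lt hα2)
        have h2 : α ^ (2 * (m + 1)) * P 1 = α ^ 2 * (α ^ (2 * m) * P 1) := by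
          rw [pow_mul, pow_mul]; ring
        nlinarith [mul_nonneg hcpos hNm]
  obtain ⟨keq, klb⟩ := key n hn le_rfl
  set S : ℝ := ∑ i ∈ Finset.Icc 1 n, P i
  set T : ℝ := ∑ i ∈ Finset.Icc 1 n, N i
  have hε2 : ε₀ ^ 2 ≤ 1 / 4 := by
    rw [abs_le] at hε₀; nlinarith
  have hP1v : P 1 = ε₀ ^ 2 / α ^ 2 := by
    rw [hP1]; field_simp
  have hP1le : P 1 ≤ 1 / (4 * α ^ 2) := by
    rw [hP1v, div_le_div_iff₀ hα2 (by positivity)]; nlinarith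
  have hαn : 0 < α ^ (2 * n) := by positivity
  have hαn1 : α ^ (2 * n) < 1 := pow_lt_one₀ (le_of_lt hα0) hα1 (by omega)
  -- P 1 * (1 - α^(2n)) < 1/(4α²)
  have hmain : P 1 - α ^ (2 * n) * P 1 < 1 / (4 * α ^ 2) := by
    rcases eq_or_lt_of_le (sq_nonneg ε₀) with h0 | h0
    · have : P 1 = 0 := by rw [hP1v, ← h0]; simp
      rw [this]
      norm_num
      positivity
    · have hP1pos : 0 < P 1 := by rw [hP1v]; positivity
      nlinarith [mul_pos hαn hP1pos]
  have hSlt : (1 - α ^ 2) * S < c * T + 1 / (4 * α ^ 2) := by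
    have : α ^ (2 * n) * P 1 ≤ P (n + 1) := klb
    linarith [keq]
  have hgoal : S < T * (α⁻¹ ^ 2 - 1) + 1 / (4 * α ^ 2 * (1 - α ^ 2)) := by
    have hrhs : (1 - α ^ 2) * (T * (α⁻¹ ^ 2 - 1) + 1 / (4 * α ^ 2 * (1 - α ^ 2)))
        = c * T + 1 / (4 * α ^ 2) := by
      rw [hc]
      field_simp
    have := hSlt
    rw [← hrhs] at this
    exact lt_of_mul_lt_mul_left this (le_of_lt h1α2)
  have hnpos : (0:ℝ) < (n : ℝ) := by exact_mod_cast hn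
  have hninv : (0:ℝ) < 1 / (n : ℝ) := by positivity
  rw [hNbar]
  calc (1 / (n : ℝ)) * S < (1 / (n : ℝ)) * (T * (α⁻¹ ^ 2 - 1) + 1 / (4 * α ^ 2 * (1 - α ^ 2))) :=
        (mul_lt_mul_iff_right₀ hninv).mpr hgoal
    _ = 1 / (n : ℝ) * T * (α⁻¹ ^ 2 - 1) + 1 / (n : ℝ) * (1 / (4 * α ^ 2 * (1 - α ^ 2))) := by
        ring
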